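/- arXiv:1606.02621 — 9 statements merged into one kernel-verified Lean document; each statement's English description precedes it below -/
import Mathlib

section
/- Let (R, m, k) be a Henselian commutative noetherian local ring and let φ : M → F be an irreducible monomorphism of finitely generated R-modules with F free such that the image of φ is contained in mF. Then M is isomorphic to a direct summand of m. -/
/-!
Pick a basis vector `e` of `F` with coordinate functional `π`. Since `Im φ ⊆ 𝔪F`, the map `φ`
factors as `M → 𝔪 × F → F`, `x ↦ (π (φ x), φ x)`, `(a, y) ↦ a • e + y - π y • e`. The second map
is not a split epimorphism because `π` sends its image into `𝔪`, so by irreducibility the first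
one has a retraction `r`. Then `x ↦ r (π (φ x), 0)` differs from the identity by a map into `𝔪M`,
so it is an automorphism by Nakayama, and correcting `r` by its inverse gives a retraction of
`π ∘ φ : M → 𝔪`.
-/

universe u

/-- A homomorphism `f : M → N` of `R`-modules is *irreducible* if it is neither a split
monomorphism nor a split epimorphism, and for every factorization `f = h ∘ g` through a
finitely generated `R`-module `L`, either `g` is a split monomorphism or `h` is a split
epimorphism. -/
def IsIrreducibleHom {R : Type u} [CommRing R] {M N : Type u} [AddCommGroup M] [Module R M]
    [AddCommGroup N] [Module R N] (f : M →ₗ[R] N) : Prop :=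
  (¬ ∃ r : N →ₗ[R] M, r ∘ₗ f = LinearMap.id) ∧
  (¬ ∃ s : N →ₗ[R] M, f ∘ₗ s = LinearMap.id) ∧
  ∀ (L : Type u) [AddCommGroup L] [Module R L], Module.Finite R L →
    ∀ (g : M →ₗ[R] L) (h : L →ₗ[R] N), h ∘ₗ g = f →
      (∃ r : L →ₗ[R] M, r ∘ₗ g = LinearMap.id) ∨ (∃ s : N →ₗ[R] L, h ∘ₗ s = LinearMap.id)

open IsLocalRing LinearMap

theorem exists_linearEquiv_prod_of_comp_eq_id {R : Type*} [Ring R] {M N : Type u}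
    [AddCommGroup M] [Module R M] [AddCommGroup N] [Module R N] {i : M →ₗ[R] N}
    {p : N →ₗ[R] M} (h : p ∘ₗ i = LinearMap.id) :
    ∃ (K : Type u) (_ : AddCommGroup K) (_ : Module R K), Nonempty (N ≃ₗ[R] M × K) :=
  ⟨_, _, _, ⟨((LinearMap.exact_map_mkQ_range i).splitInjectiveEquiv
    (Submodule.mkQ_surjective _) ⟨p, h⟩).1⟩⟩

section LocalRing

variable {R : Type*} [CommRing R] [IsLocalRing R] {M : Type*} [AddCommGroup M] [Module R M]
  [Module.Finite R M]

theorem IsLocalRing.surjective_of_sub_mem_maximalIdeal_smul_top {u : M →ₗ[R] M}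
    (hu : ∀ x, x - u x ∈ maximalIdeal R • (⊤ : Submodule R M)) : Function.Surjective u := by
  rw [← range_eq_top, ← map_mkQ_eq_top, eq_top_iff]
  rintro q -
  obtain ⟨x, rfl⟩ := Submodule.mkQ_surjective _ q
  refine ⟨u x, mem_range_self u x, ?_⟩
  simpa only [Submodule.mkQ_apply, Submodule.Quotient.eq, neg_sub] using
    (Submodule.neg_mem _ (hu x))

theorem IsLocalRing.exists_comp_eq_id_of_comp_prod_eq_id {L₁ L₂ : Type*} [AddCommGroup L₁]
    [Module R L₁] [AddCommGroup L₂] [Module R L₂] {g₁ : M →ₗ[R] L₁} {g₂ : M →ₗ[R] L₂}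
    (hg₂ : ∀ x, g₂ x ∈ maximalIdeal R • (⊤ : Submodule R L₂)) {r : L₁ × L₂ →ₗ[R] M}
    (hr : r ∘ₗ g₁.prod g₂ = LinearMap.id) : ∃ p : L₁ →ₗ[R] M, p ∘ₗ g₁ = LinearMap.id := by
  set u := r ∘ₗ inl R L₁ L₂ ∘ₗ g₁
  have hsub : ∀ x, x - u x = r (inr R L₁ L₂ (g₂ x)) := fun x => by
    have hx : r (g₁ x, g₂ x) = x := LinearMap.congr_fun hr x
    nth_rw 1 [← hx]
    simp [u, ← map_sub]
  have hu : Function.Bijective u :=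
    OrzechProperty.bijective_of_surjective_endomorphism u <|
      surjective_of_sub_mem_maximalIdeal_smul_top fun x =>
        hsub x ▸ Submodule.smul_top_le_comap_smul_top _ (r ∘ₗ inr R L₁ L₂) (hg₂ x)
  let e := LinearEquiv.ofBijective u hu
  refine ⟨e.symm ∘ₗ r ∘ₗ inl R L₁ L₂, LinearMap.ext fun x => ?_⟩
  exact e.symm_apply_apply x

end LocalRing

section Irreducible

variable {R : Type u} [CommRing R] {M N : Type u} [AddCommGroup M] [Module R M]
  [AddCommGroup N] [Module R N]

theorem IsIrreducibleHom.nontrivial {f : M →ₗ[R] N} (hf : IsIrreducibleHom f) : Nontrivial N := by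
  by_contra hN
  rw [not_nontrivial_iff_subsingleton] at hN
  exact hf.2.1 ⟨0, LinearMap.ext fun _ => Subsingleton.elim _ _⟩

theorem IsIrreducibleHom.exists_comp_eq_id_maximalIdeal [IsLocalRing R] [IsNoetherianRing R]
    [Module.Finite R M] [Module.Finite R N] {φ : M →ₗ[R] N} (hφ : IsIrreducibleHom φ)
    (hrange : range φ ≤ maximalIdeal R • (⊤ : Submodule R N)) {π : N →ₗ[R] R} {e : N}
    (he : π e = 1) :
    ∃ (i : M →ₗ[R] maximalIdeal R) (p : maximalIdeal R →ₗ[R] M), p ∘ₗ i = LinearMap.id := by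
  have hπφ : ∀ x, π (φ x) ∈ maximalIdeal R := fun x => by
    simpa using Submodule.smul_top_le_comap_smul_top _ π (hrange (mem_range_self φ x))
  let g₁ : M →ₗ[R] maximalIdeal R := (π ∘ₗ φ).codRestrict _ hπφ
  let h : maximalIdeal R × N →ₗ[R] N := (toSpanSingleton R N e ∘ₗ (maximalIdeal R).subtype).coprod
    (LinearMap.id - toSpanSingleton R N e ∘ₗ π)
  have hfac : h ∘ₗ g₁.prod φ = φ := by
    ext x
    simp [h, g₁]
  have hπh : ∀ y, π (h y) ∈ maximalIdeal R := by
    rintro ⟨a, y⟩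
    simp [h, he]
  have : Module.Finite R (maximalIdeal R) :=
    Module.Finite.iff_fg.mpr (IsNoetherian.noetherian _)
  obtain ⟨r, hr⟩ | ⟨s, hs⟩ := hφ.2.2 _ inferInstance (g₁.prod φ) h hfac
  · exact ⟨g₁, exists_comp_eq_id_of_comp_prod_eq_id (fun x => hrange (mem_range_self φ x)) hr⟩
  · have hes : h (s e) = e := LinearMap.congr_fun hs e
    have h1 := hπh (s e)
    rw [hes, he] at h1
    exact (notMem_maximalIdeal.mpr isUnit_one h1).elim

end Irreducible

theorem summand_of_maximalIdeal_of_irreducible_mono_general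
    {R : Type u} [CommRing R] [IsNoetherianRing R] [IsLocalRing R]
    {M F : Type u} [AddCommGroup M] [Module R M] [Module.Finite R M]
    [AddCommGroup F] [Module R F] [Module.Finite R F] [Module.Free R F]
    (φ : M →ₗ[R] F)
    (hirr : IsIrreducibleHom φ)
    (hrange : LinearMap.range φ ≤ (IsLocalRing.maximalIdeal R) • (⊤ : Submodule R F)) :
    ∃ (K : Type u) (_ : AddCommGroup K) (_ : Module R K),
      Nonempty ((IsLocalRing.maximalIdeal R) ≃ₗ[R] (M × K)) := by
  have := hirr.nontrivial
  let b := Module.Free.chooseBasis R F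
  obtain ⟨j⟩ := b.index_nonempty
  obtain ⟨i, p, hpi⟩ := hirr.exists_comp_eq_id_maximalIdeal hrange (π := b.coord j) (e := b j)
    (by simp)
  exact exists_linearEquiv_prod_of_comp_eq_id hpi

/-- Let `R` be a Henselian noetherian local ring and `φ : M → F` an irreducible monomorphism
of finitely generated `R`-modules with `F` free and `Im(φ) ⊆ 𝔪F`. Then `M` is isomorphic to
a direct summand of the maximal ideal `𝔪`. -/
theorem summand_of_maximalIdeal_of_irreducible_mono
    {R : Type u} [CommRing R] [IsNoetherianRing R] [IsLocalRing R] [HenselianLocalRing R]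
    {M F : Type u} [AddCommGroup M] [Module R M] [Module.Finite R M]
    [AddCommGroup F] [Module R F] [Module.Finite R F] [Module.Free R F]
    (φ : M →ₗ[R] F) (hinj : Function.Injective φ)
    (hirr : IsIrreducibleHom φ)
    (hrange : LinearMap.range φ ≤ (IsLocalRing.maximalIdeal R) • (⊤ : Submodule R F)) :
    ∃ (K : Type u) (_ : AddCommGroup K) (_ : Module R K),
      Nonempty ((IsLocalRing.maximalIdeal R) ≃ₗ[R] (M × K)) :=
  summand_of_maximalIdeal_of_irreducible_mono_general φ hirr hrange
end

section
/- Let (R, m, k) be a Henselian commutative noetherian local ring and let φ : M → F be an irreducible monomorphism of finitely generated R-modules with F free such that the image of φ is contained in mF. If M is indecomposable, then for every surjective R-module homomorphism π : F → R there exists a split monomorphism η : M → m such that θ ∘ η = π ∘ φ, where θ : m → R denotes the inclusion map. -/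
/-!
Write `𝔪` for the maximal ideal and pick a section `s` of `π`. Then `φ` factors through
`𝔪 × F` as `x ↦ (π (φ x), φ x)` followed by `(a, y) ↦ s a + y - s (π y)`. The second map is not
a split epimorphism, because composed with `π` it lands in `𝔪`; so irreducibility of `φ` gives
a retraction `r` of the first. Since `φ x ∈ 𝔪 F`, we get `x - r (π (φ x), 0) = r (0, φ x) ∈ 𝔪 M`,
so by Nakayama the endomorphism `x ↦ r (π (φ x), 0)` of `M` is surjective, hence bijective, and
composing its inverse with `r (·, 0)` gives a retraction of `η = π ∘ φ : M → 𝔪`.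
-/

universe u

/-- An `R`-module is indecomposable if it is nonzero and admits no nontrivial direct sum
decomposition. -/
def IsIndecomposableModule (R : Type u) (M : Type u) [CommRing R] [AddCommGroup M]
    [Module R M] : Prop :=
  Nontrivial M ∧ ∀ A B : Submodule R M, IsCompl A B → A = ⊥ ∨ B = ⊥

theorem Ideal.apply_mem_of_mem_smul_top {R M : Type*} [CommSemiring R] [AddCommMonoid M]
    [Module R M]
    {I : Ideal R} (f : M →ₗ[R] R) {x : M} (hx : x ∈ I • (⊤ : Submodule R M)) : f x ∈ I := by
  simpa [Ideal.smul_eq_mul, Ideal.mul_top] using Submodule.smul_top_le_comap_smul_top I f hx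

theorem LinearMap.bijective_of_sub_mem_smul_top {R M : Type*} [CommRing R] [AddCommGroup M]
    [Module R M] [Module.Finite R M] {I : Ideal R} (hI : I ≤ Ideal.jacobson ⊥)
    (e : M →ₗ[R] M) (he : ∀ x, x - e x ∈ I • (⊤ : Submodule R M)) : Function.Bijective e := by
  refine OrzechProperty.bijective_of_surjective_endomorphism e (LinearMap.range_eq_top.mp ?_)
  refine top_le_iff.mp (Submodule.le_of_le_smul_of_le_jacobson_bot Module.Finite.fg_top hI ?_)
  intro x _
  simpa using Submodule.add_mem_sup (LinearMap.mem_range_self e x) (he x)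

theorem LinearMap.exists_leftInverse_of_bijective_comp {R M N : Type*} [Semiring R]
    [AddCommMonoid M] [Module R M] [AddCommMonoid N] [Module R N] (η : M →ₗ[R] N) (r : N →ₗ[R] M)
    (h : Function.Bijective (r ∘ₗ η)) : ∃ r' : N →ₗ[R] M, r' ∘ₗ η = LinearMap.id :=
  ⟨(LinearEquiv.ofBijective _ h).symm.toLinearMap ∘ₗ r, by
    ext x; exact (LinearEquiv.ofBijective _ h).symm_apply_apply x⟩

theorem IsIrreducibleHom.exists_leftInverse_prod {R : Type u} [CommRing R] {M F : Type u}
    [AddCommGroup M] [Module R M] [AddCommGroup F] [Module R F] [Module.Finite R F]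
    {φ : M →ₗ[R] F} (hφ : IsIrreducibleHom φ) {I : Ideal R} [Module.Finite R I] (hI : I ≠ ⊤)
    {π : F →ₗ[R] R} (hπ : Function.Surjective π) (η : M →ₗ[R] I)
    (hη : I.subtype ∘ₗ η = π ∘ₗ φ) :
    ∃ r : I × F →ₗ[R] M, r ∘ₗ η.prod φ = LinearMap.id := by
  obtain ⟨x₀, hx₀⟩ := hπ 1
  set s := LinearMap.toSpanSingleton R F x₀
  have hπs : π ∘ₗ s = LinearMap.id := by ext; simp [s, hx₀]
  set h : I × F →ₗ[R] F := (s ∘ₗ I.subtype).coprod (LinearMap.id - s ∘ₗ π)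
  have hfactor : h ∘ₗ η.prod φ = φ := by
    ext x
    have hηx : (η x : R) = π (φ x) := congr($hη x)
    simp [h, hηx]
  have hπh : π ∘ₗ h = I.subtype ∘ₗ LinearMap.fst R I F := by
    ext <;> simp [h, ← LinearMap.comp_apply π s, hπs]
  refine (hφ.2.2 _ inferInstance _ h hfactor).resolve_right ?_
  rintro ⟨t, ht⟩
  refine hI ((Ideal.eq_top_iff_one I).mpr ?_)
  have hone : (1 : R) = (t x₀).1 := calc
    (1 : R) = π (h (t x₀)) := by rw [← LinearMap.comp_apply h t, ht, LinearMap.id_apply, hx₀]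
    _ = (t x₀).1 := congr($hπh (t x₀))
  exact hone ▸ (t x₀).1.2

theorem exists_split_mono_to_maximalIdeal_of_irreducible_mono_general
    {R : Type u} [CommRing R] [IsNoetherianRing R] [IsLocalRing R]
    {M F : Type u} [AddCommGroup M] [Module R M] [Module.Finite R M]
    [AddCommGroup F] [Module R F] [Module.Finite R F]
    (φ : M →ₗ[R] F)
    (hirr : IsIrreducibleHom φ)
    (hrange : LinearMap.range φ ≤ (IsLocalRing.maximalIdeal R) • (⊤ : Submodule R F))
    (π : F →ₗ[R] R) (hπ : Function.Surjective π) :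
    ∃ η : M →ₗ[R] (IsLocalRing.maximalIdeal R),
      (∃ r : (IsLocalRing.maximalIdeal R) →ₗ[R] M, r ∘ₗ η = LinearMap.id) ∧
      (IsLocalRing.maximalIdeal R).subtype ∘ₗ η = π ∘ₗ φ := by
  set I := IsLocalRing.maximalIdeal R
  have hφI (x : M) : φ x ∈ I • (⊤ : Submodule R F) := hrange ⟨x, rfl⟩
  let η : M →ₗ[R] I :=
    (π ∘ₗ φ).codRestrict I fun x ↦ Ideal.apply_mem_of_mem_smul_top π (hφI x)
  obtain ⟨r, hr⟩ :=
    hirr.exists_leftInverse_prod (IsLocalRing.maximalIdeal.isMaximal R).ne_top hπ η rfl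
  have hsub (x : M) : x - ((r ∘ₗ LinearMap.inl R I F) ∘ₗ η) x ∈ I • (⊤ : Submodule R M) := by
    have hx : x - r (η x, 0) = r (0, φ x) := by
      rw [sub_eq_iff_eq_add', ← map_add, Prod.mk_add_mk, add_zero, zero_add]
      exact congr($hr x).symm
    simpa [hx] using Submodule.smul_top_le_comap_smul_top I (r ∘ₗ LinearMap.inr R I F) (hφI x)
  obtain ⟨r', hr'⟩ := η.exists_leftInverse_of_bijective_comp _
    (LinearMap.bijective_of_sub_mem_smul_top (IsLocalRing.maximalIdeal_le_jacobson ⊥) _ hsub)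
  exact ⟨η, ⟨r', hr'⟩, rfl⟩

/-- Let `R` be a Henselian noetherian local ring and `φ : M → F` an irreducible monomorphism
of finitely generated `R`-modules with `F` free and `Im(φ) ⊆ 𝔪F`. If `M` is indecomposable,
then for every surjection `π : F → R` there is a split monomorphism `η : M → 𝔪` with
`θ ∘ η = π ∘ φ`, where `θ : 𝔪 → R` is the inclusion. -/
theorem exists_split_mono_to_maximalIdeal_of_irreducible_mono
    {R : Type u} [CommRing R] [IsNoetherianRing R] [IsLocalRing R] [HenselianLocalRing R]
    {M F : Type u} [AddCommGroup M] [Module R M] [Module.Finite R M]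
    [AddCommGroup F] [Module R F] [Module.Finite R F] [Module.Free R F]
    (φ : M →ₗ[R] F) (hinj : Function.Injective φ)
    (hirr : IsIrreducibleHom φ)
    (hrange : LinearMap.range φ ≤ (IsLocalRing.maximalIdeal R) • (⊤ : Submodule R F))
    (hM : IsIndecomposableModule R M)
    (π : F →ₗ[R] R) (hπ : Function.Surjective π) :
    ∃ η : M →ₗ[R] (IsLocalRing.maximalIdeal R),
      (∃ r : (IsLocalRing.maximalIdeal R) →ₗ[R] M, r ∘ₗ η = LinearMap.id) ∧
      (IsLocalRing.maximalIdeal R).subtype ∘ₗ η = π ∘ₗ φ :=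
  exists_split_mono_to_maximalIdeal_of_irreducible_mono_general φ hirr hrange π hπ
end

section
/- Let (R, m, k) be a commutative noetherian local ring and let φ : F → M be an irreducible epimorphism of finitely generated R-modules with F free. Then the kernel of φ is isomorphic to k as an R-module. -/
/-!
If `K ≤ ker φ` is nonzero, the factorization `F → F ⧸ K → M` of `φ` is not split on the left, so
irreducibility makes `F ⧸ K → M` a split epimorphism. For `K = R ∙ x` with `x ∉ 𝔪F`, `R ∙ x` is a
direct summand of `F` and this would split `φ` itself; hence `ker φ ≤ 𝔪F`. For general `K`, the
kernel of `F ⧸ K → M` is then a direct summand of `F ⧸ K` lying in `𝔪 (F ⧸ K)`, so it vanishes by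
Nakayama, i.e. `K = ker φ`. Thus `ker φ` is a simple module, and over a local ring that is `k`.
-/

universe u

open IsLocalRing LinearMap Submodule

theorem IsLocalRing.exists_apply_eq_one_of_notMem_maximalIdeal_smul_top
    {R F : Type*} [CommRing R] [IsLocalRing R] [AddCommGroup F] [Module R F] [Module.Free R F]
    {x : F} (hx : x ∉ maximalIdeal R • (⊤ : Submodule R F)) :
    ∃ l : F →ₗ[R] R, l x = 1 := by
  let b := Module.Free.chooseBasis R F
  obtain ⟨j, hj⟩ : ∃ j, b.repr x j ∉ maximalIdeal R := by
    contrapose! hx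
    rw [← b.linearCombination_repr x, Finsupp.linearCombination_apply]
    exact Submodule.finsuppSum_mem _ _ _ _ fun i _ => smul_mem_smul (hx i) mem_top
  obtain ⟨u, hu⟩ := (notMem_maximalIdeal.mp hj).exists_left_inv
  exact ⟨u • b.coord j, hu⟩

theorem LinearMap.ker_eq_bot_of_comp_eq_id_of_ker_le_smul_top
    {R P M : Type*} [CommRing R] [IsLocalRing R] [AddCommGroup P] [Module R P] [Module.Finite R P]
    [AddCommGroup M] [Module R M] {h : P →ₗ[R] M} {s : M →ₗ[R] P} (hs : h ∘ₗ s = LinearMap.id)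
    (hker : ker h ≤ maximalIdeal R • ⊤) : ker h = ⊥ := by
  let p : P →ₗ[R] P := LinearMap.id - s ∘ₗ h
  have hp_ker : ∀ y ∈ ker h, p y = y := fun y hy => by simp_all [p]
  have hrange : range p = ker h := by
    refine le_antisymm ?_ fun y hy => ⟨y, hp_ker y hy⟩
    rintro _ ⟨y, rfl⟩
    simp [p, show h (s (h y)) = h y from congr($hs (h y))]
  have hle : ker h ≤ maximalIdeal R • ker h := fun y hy => by
    rw [← hrange, range_eq_map, ← map_smul'']
    exact ⟨y, hker hy, hp_ker y hy⟩
  refine eq_bot_of_le_smul_of_le_jacobson_bot _ _ ?_ hle (maximalIdeal_le_jacobson _)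
  rw [← hrange, range_eq_map]
  exact (Module.Finite.fg_top).map p

namespace IsIrreducibleHom

variable {R M N : Type u} [CommRing R] [AddCommGroup M] [Module R M] [AddCommGroup N]
  [Module R N] {f : M →ₗ[R] N}

theorem exists_liftQ_comp_eq_id [Module.Finite R M] (hf : IsIrreducibleHom f)
    {K : Submodule R M} (hK : K ≤ ker f) (hK0 : K ≠ ⊥) :
    ∃ s : N →ₗ[R] M ⧸ K, K.liftQ f hK ∘ₗ s = LinearMap.id := by
  refine (hf.2.2 (M ⧸ K) inferInstance K.mkQ (K.liftQ f hK) (K.liftQ_mkQ f hK)).resolve_left ?_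
  rintro ⟨r, hr⟩
  obtain ⟨x, hxK, hx0⟩ := exists_mem_ne_zero_of_ne_bot hK0
  exact hx0 (by simpa [(Quotient.mk_eq_zero K).mpr hxK] using congr($hr x).symm)

theorem apply_ne_one_of_mem_ker [Nontrivial R] [Module.Finite R M] (hf : IsIrreducibleHom f)
    {x : M} (hx : x ∈ ker f) (l : M →ₗ[R] R) : l x ≠ 1 := by
  intro hlx
  have hx0 : x ≠ 0 := by rintro rfl; simp at hlx
  have hK : R ∙ x ≤ ker f := (span_singleton_le_iff_mem x _).mpr hx
  obtain ⟨s, hs⟩ := hf.exists_liftQ_comp_eq_id hK (by simpa using hx0)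
  -- the retraction `y ↦ y - l y • x` onto the complement `ker l` of `R ∙ x` does not change `f`
  let π : M ⧸ (R ∙ x) →ₗ[R] M := (R ∙ x).liftQ (LinearMap.id - l.smulRight x)
    ((span_singleton_le_iff_mem x _).mpr (by simp [hlx]))
  have hπ : f ∘ₗ π = (R ∙ x).liftQ f hK := by
    ext y
    simp [π, mem_ker.mp hx]
  exact hf.2.1 ⟨π ∘ₗ s, by rw [← comp_assoc, hπ, hs]⟩

theorem ker_le_maximalIdeal_smul_top [IsLocalRing R] [Module.Free R M] [Module.Finite R M]
    (hf : IsIrreducibleHom f) : ker f ≤ maximalIdeal R • ⊤ := fun x hx => by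
  by_contra hxm
  obtain ⟨l, hl⟩ := exists_apply_eq_one_of_notMem_maximalIdeal_smul_top hxm
  exact hf.apply_ne_one_of_mem_ker hx l hl

theorem isAtom_ker [IsLocalRing R] [Module.Free R M] [Module.Finite R M]
    (hf : IsIrreducibleHom f) (hsurj : Function.Surjective f) : IsAtom (ker f) := by
  refine ⟨fun hker => hf.2.1 ?_, fun K hK => ?_⟩
  · let e := LinearEquiv.ofBijective f ⟨ker_eq_bot.mp hker, hsurj⟩
    exact ⟨e.symm, by ext y; exact e.apply_symm_apply y⟩
  by_contra hK0
  obtain ⟨s, hs⟩ := hf.exists_liftQ_comp_eq_id hK.le hK0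
  have hker_le : ker (K.liftQ f hK.le) ≤ maximalIdeal R • ⊤ := by
    rw [ker_liftQ, ← K.range_mkQ, range_eq_map, ← map_smul'']
    exact map_mono hf.ker_le_maximalIdeal_smul_top
  have hker := ker_eq_bot_of_comp_eq_id_of_ker_le_smul_top hs hker_le
  rw [ker_liftQ, eq_bot_iff, map_le_iff_le_comap, comap_bot, ker_mkQ] at hker
  exact hK.not_ge hker

end IsIrreducibleHom

theorem ker_of_irreducible_epi_iso_residueField_general
    {R : Type u} [CommRing R] [IsLocalRing R]
    {F M : Type u} [AddCommGroup F] [Module R F] [Module.Finite R F] [Module.Free R F]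
    [AddCommGroup M] [Module R M]
    (φ : F →ₗ[R] M) (hsurj : Function.Surjective φ) (hirr : IsIrreducibleHom φ) :
    Nonempty ((LinearMap.ker φ) ≃ₗ[R] (IsLocalRing.ResidueField R)) := by
  have hsimple := isSimpleModule_iff_isAtom.mpr (hirr.isAtom_ker hsurj)
  obtain ⟨I, hI, ⟨e⟩⟩ := isSimpleModule_iff_quot_maximal.mp hsimple
  obtain rfl := eq_maximalIdeal hI
  exact ⟨e⟩

/-- If `φ : F → M` is an irreducible epimorphism of finitely generated modules over a
commutative noetherian local ring `(R, 𝔪, k)` with `F` free, then `ker φ ≅ k`. -/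
theorem ker_of_irreducible_epi_iso_residueField
    {R : Type u} [CommRing R] [IsNoetherianRing R] [IsLocalRing R]
    {F M : Type u} [AddCommGroup F] [Module R F] [Module.Finite R F] [Module.Free R F]
    [AddCommGroup M] [Module R M] [Module.Finite R M]
    (φ : F →ₗ[R] M) (hsurj : Function.Surjective φ) (hirr : IsIrreducibleHom φ) :
    Nonempty ((LinearMap.ker φ) ≃ₗ[R] (IsLocalRing.ResidueField R)) :=
  ker_of_irreducible_epi_iso_residueField_general φ hsurj hirr
end

section
/- Let (R, m, k) be a commutative noetherian local ring and let φ : F → M be an irreducible epimorphism of finitely generated R-modules with F free. Assume that the endomorphism ring End_R(M) is a local ring, and let ι : R → F be a split monomorphism. Then the composition φ ∘ ι : R → M is irreducible; in particular, φ ∘ ι is either surjective or injective. -/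
/-!
Let `r` be a retraction of `ι`. A factorization `h ∘ g = φ ∘ ι` through `L` yields the
factorization `φ = [h, φ] ∘ (g ∘ r, 1 - ι ∘ r)` through `L × F`. If the first map splits,
so does `g`; if `[h, φ]` splits, locality of `End(M)` makes `h` or `φ` split, and `φ` cannot.
Also `φ ∘ ι` is not a split mono, because a split mono into `M` with local endomorphism ring
is an isomorphism, which would make `φ` a split epi. Finally, an irreducible map is
surjective or injective, by factoring it through its image.
-/

universe u

namespace LinearMap

section Split

variable {R : Type*} [Ring R] {M N P : Type*} [AddCommGroup M] [Module R M]
  [AddCommGroup N] [Module R N] [AddCommGroup P] [Module R P]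

def IsSplitMono (f : M →ₗ[R] N) : Prop := ∃ r : N →ₗ[R] M, r ∘ₗ f = id

def IsSplitEpi (f : M →ₗ[R] N) : Prop := ∃ s : N →ₗ[R] M, f ∘ₗ s = id

theorem IsSplitMono.comp {f : N →ₗ[R] P} {g : M →ₗ[R] N} (hf : f.IsSplitMono)
    (hg : g.IsSplitMono) : (f ∘ₗ g).IsSplitMono := by
  obtain ⟨r, hr⟩ := hf
  obtain ⟨r', hr'⟩ := hg
  exact ⟨r' ∘ₗ r, by rw [comp_assoc, ← comp_assoc g f r, hr, id_comp, hr']⟩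

theorem IsSplitMono.of_comp {f : N →ₗ[R] P} {g : M →ₗ[R] N} (h : (f ∘ₗ g).IsSplitMono) :
    g.IsSplitMono := by
  obtain ⟨r, hr⟩ := h
  exact ⟨r ∘ₗ f, by rw [comp_assoc, hr]⟩

theorem IsSplitEpi.of_comp {f : N →ₗ[R] P} {g : M →ₗ[R] N} (h : (f ∘ₗ g).IsSplitEpi) :
    f.IsSplitEpi := by
  obtain ⟨s, hs⟩ := h
  exact ⟨g ∘ₗ s, by rw [← comp_assoc, hs]⟩

theorem IsSplitMono.injective {f : M →ₗ[R] N} (hf : f.IsSplitMono) : Function.Injective f := by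
  obtain ⟨r, hr⟩ := hf
  exact Function.LeftInverse.injective (g := r) fun x => congr($hr x)

theorem IsSplitEpi.surjective {f : M →ₗ[R] N} (hf : f.IsSplitEpi) : Function.Surjective f := by
  obtain ⟨s, hs⟩ := hf
  exact Function.RightInverse.surjective (g := s) fun x => congr($hs x)

theorem isSplitEpi_of_isUnit_comp {f : M →ₗ[R] N} (s : N →ₗ[R] M)
    (hu : IsUnit (f ∘ₗ s : Module.End R N)) : f.IsSplitEpi := by
  obtain ⟨u, hu⟩ := hu
  exact ⟨s ∘ₗ ↑u⁻¹, by rw [← comp_assoc, ← hu]; exact u.mul_inv⟩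

variable [IsLocalRing (Module.End R N)]

theorem IsSplitEpi.of_coprod {f : M →ₗ[R] N} {g : P →ₗ[R] N} (h : (f.coprod g).IsSplitEpi) :
    f.IsSplitEpi ∨ g.IsSplitEpi := by
  obtain ⟨s, hs⟩ := h
  have hsum : (f ∘ₗ fst R M P ∘ₗ s : Module.End R N) + g ∘ₗ snd R M P ∘ₗ s = 1 := by
    ext x; simpa using congr($hs x)
  exact (IsLocalRing.isUnit_or_isUnit_of_add_one hsum).imp
    (isSplitEpi_of_isUnit_comp _) (isSplitEpi_of_isUnit_comp _)

theorem IsSplitMono.isSplitEpi [Nontrivial M] {f : M →ₗ[R] N} (hf : f.IsSplitMono) :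
    f.IsSplitEpi := by
  obtain ⟨p, hp⟩ := hf
  have hsum : (f ∘ₗ p : Module.End R N) + (1 - f ∘ₗ p) = 1 := add_sub_cancel _ _
  -- `1 - f ∘ p` kills `f`, so if it is a unit then `f = 0` and `M = 0`
  rcases IsLocalRing.isUnit_or_isUnit_of_add_one hsum with hu | ⟨u, hu⟩
  · exact isSplitEpi_of_isUnit_comp p hu
  have hkill : (1 - f ∘ₗ p : Module.End R N) ∘ₗ f = 0 := by
    rw [sub_comp, comp_assoc, hp, comp_id, Module.End.one_eq_id, id_comp, sub_self]
  have hf0 : f = 0 := calc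
    f = (↑u⁻¹ * ↑u : Module.End R N) ∘ₗ f := by rw [u.inv_mul]; rfl
    _ = 0 := by rw [Module.End.mul_eq_comp, comp_assoc, hu, hkill, comp_zero]
  rw [hf0, comp_zero] at hp
  obtain ⟨x, hx⟩ := exists_ne (0 : M)
  exact absurd congr($hp x).symm hx

end Split

end LinearMap

open LinearMap

section Irreducible

variable {R : Type u} [CommRing R] {M N : Type u} [AddCommGroup M] [Module R M]
  [AddCommGroup N] [Module R N]

theorem IsIrreducibleHom.not_isSplitEpi {f : M →ₗ[R] N} (hf : IsIrreducibleHom f) :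
    ¬ f.IsSplitEpi :=
  hf.2.1

theorem IsIrreducibleHom.isSplitMono_or_isSplitEpi {L : Type u} [AddCommGroup L] [Module R L]
    [Module.Finite R L] {f : M →ₗ[R] N} (hf : IsIrreducibleHom f) {g : M →ₗ[R] L}
    {h : L →ₗ[R] N} (hgh : h ∘ₗ g = f) : g.IsSplitMono ∨ h.IsSplitEpi :=
  hf.2.2 L inferInstance g h hgh

theorem IsIrreducibleHom.surjective_or_injective [Module.Finite R M] {f : M →ₗ[R] N}
    (hf : IsIrreducibleHom f) : Function.Surjective f ∨ Function.Injective f := by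
  have hfac : f.range.subtype ∘ₗ f.rangeRestrict = f := f.subtype_comp_codRestrict _ _
  rcases hf.isSplitMono_or_isSplitEpi hfac with hmono | hepi
  · exact .inr fun a b hab => hmono.injective (Subtype.ext hab)
  · exact .inl (range_eq_top.mp (f.range.range_subtype ▸ range_eq_top.mpr hepi.surjective))

theorem IsIrreducibleHom.isSplitMono_or_isSplitEpi_of_comp_eq {F P L : Type u}
    [AddCommGroup F] [Module R F] [Module.Finite R F] [AddCommGroup P] [Module R P]
    [AddCommGroup L] [Module R L] [Module.Finite R L] [IsLocalRing (Module.End R M)]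
    {φ : F →ₗ[R] M} (hφ : IsIrreducibleHom φ) {ι : P →ₗ[R] F} (hι : ι.IsSplitMono)
    {g : P →ₗ[R] L} {h : L →ₗ[R] M} (hgh : h ∘ₗ g = φ ∘ₗ ι) :
    g.IsSplitMono ∨ h.IsSplitEpi := by
  obtain ⟨r, hr⟩ := hι
  set G : F →ₗ[R] L × F := (g ∘ₗ r).prod (LinearMap.id - ι ∘ₗ r)
  have hgh' (a : P) : h (g a) = φ (ι a) := congr($hgh a)
  have hr' (a : P) : r (ι a) = a := congr($hr a)
  have hfac : h.coprod φ ∘ₗ G = φ := by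
    ext x; simp [G, hgh']
  have hGι : G ∘ₗ ι = inl R L F ∘ₗ g := by
    ext a <;> simp [G, hr']
  rcases hφ.isSplitMono_or_isSplitEpi hfac with hG | hs
  · exact .inl (IsSplitMono.of_comp (f := inl R L F) (hGι ▸ hG.comp ⟨r, hr⟩))
  · exact .inr (hs.of_coprod.resolve_right hφ.not_isSplitEpi)

theorem IsIrreducibleHom.comp_of_isSplitMono {F P : Type u} [AddCommGroup F] [Module R F]
    [Module.Finite R F] [AddCommGroup P] [Module R P] [Nontrivial P]
    [IsLocalRing (Module.End R M)] {φ : F →ₗ[R] M} (hφ : IsIrreducibleHom φ)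
    {ι : P →ₗ[R] F} (hι : ι.IsSplitMono) : IsIrreducibleHom (φ ∘ₗ ι) :=
  ⟨fun (hmono : (φ ∘ₗ ι).IsSplitMono) => hφ.not_isSplitEpi (hmono.isSplitEpi.of_comp),
    fun (hepi : (φ ∘ₗ ι).IsSplitEpi) => hφ.not_isSplitEpi hepi.of_comp,
    fun _ _ _ _ _ _ hgh => hφ.isSplitMono_or_isSplitEpi_of_comp_eq hι hgh⟩

end Irreducible

theorem comp_split_mono_irreducible_general
    {R : Type u} [CommRing R]
    {F M : Type u} [AddCommGroup F] [Module R F] [Module.Finite R F]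
    [AddCommGroup M] [Module R M]
    (φ : F →ₗ[R] M) (hirr : IsIrreducibleHom φ)
    (hEnd : IsLocalRing (Module.End R M))
    (ι : R →ₗ[R] F) (hι : ∃ r : F →ₗ[R] R, r ∘ₗ ι = LinearMap.id) :
    IsIrreducibleHom (φ ∘ₗ ι) ∧
      (Function.Surjective (φ ∘ₗ ι) ∨ Function.Injective (φ ∘ₗ ι)) := by
  obtain ⟨x, hx⟩ := DFunLike.ne_iff.mp (one_ne_zero : (1 : Module.End R M) ≠ 0)
  have : Nontrivial M := ⟨x, 0, hx⟩
  have : Nontrivial R := Module.nontrivial R M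
  have hψ : IsIrreducibleHom (φ ∘ₗ ι) := hirr.comp_of_isSplitMono hι
  exact ⟨hψ, hψ.surjective_or_injective⟩

/-- Let `φ : F → M` be an irreducible epimorphism of finitely generated modules over a
commutative noetherian local ring with `F` free, assume `End_R(M)` is local, and let
`ι : R → F` be a split monomorphism. Then `φ ∘ ι` is irreducible; in particular it is
either surjective or injective. -/
theorem comp_split_mono_irreducible
    {R : Type u} [CommRing R] [IsNoetherianRing R] [IsLocalRing R]
    {F M : Type u} [AddCommGroup F] [Module R F] [Module.Finite R F] [Module.Free R F]
    [AddCommGroup M] [Module R M] [Module.Finite R M]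
    (φ : F →ₗ[R] M) (hsurj : Function.Surjective φ) (hirr : IsIrreducibleHom φ)
    (hEnd : IsLocalRing (Module.End R M))
    (ι : R →ₗ[R] F) (hι : ∃ r : F →ₗ[R] R, r ∘ₗ ι = LinearMap.id) :
    IsIrreducibleHom (φ ∘ₗ ι) ∧
      (Function.Surjective (φ ∘ₗ ι) ∨ Function.Injective (φ ∘ₗ ι)) :=
  comp_split_mono_irreducible_general φ hirr hEnd ι hι
end

section
/- Let (R, m, k) be a commutative noetherian local ring, let φ : F → M be an irreducible epimorphism of finitely generated R-modules with F free, assume End_R(M) is a local ring, let ι : R → F be a split monomorphism, and suppose that φ ∘ ι : R → M is surjective. Then the socle Soc R = {x ∈ R : mx = 0} is a one-dimensional k-vector space (i.e., R has type one), the map ι is an isomorphism (so F is free of rank one), and there is an isomorphism ρ : R/Soc R → M such that φ ∘ ι = ρ ∘ π, where π : R → R/Soc R is the natural surjection. -/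
universe u

/-!
Put `π = φ ∘ ι`. Lifting `φ` along `π` through the projective module `F` and applying
irreducibility to `φ = π ∘ ψ` shows that the lift `ψ : F → R` is a split monomorphism; since
`End_R(R) = R` is commutative, `ψ ∘ ι` is then invertible, so `ι` is an isomorphism and `π`
is itself an irreducible epimorphism `R → M`.

Its kernel `I` is a minimal nonzero ideal: for `0 ≠ J ⊆ I`, the factorization
`R → R/J → M` can only split on the right, and a section `s` of `R/J → M` sends `π 1` to the
class of a unit, which forces `I ⊆ J`. Nakayama gives `𝔪 I ≠ I`, so `𝔪 I = 0` and
`I = Rz ⊆ Soc R`. Conversely, an `x ∈ Soc R \ I` is ruled out by factoring `π` through the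
pushout `(R ⊕ R)/R(z, -x)` of `z` and `x`. Hence `I = Soc R = Rz ≅ k` and `M ≅ R/Soc R`.
-/
open IsLocalRing LinearMap Submodule

theorem LinearMap.comp_comm_ring {R : Type*} [CommSemiring R] (f g : R →ₗ[R] R) :
    f ∘ₗ g = g ∘ₗ f := by
  refine LinearMap.ext_ring ?_
  have hf := f.map_smul (g 1) 1
  have hg := g.map_smul (f 1) 1
  simp only [smul_eq_mul, mul_one] at hf hg
  simp only [comp_apply, hf, hg, mul_comm]

namespace IsIrreducibleHom

variable {R : Type u} [CommRing R] {M N : Type u} [AddCommGroup M] [Module R M]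
  [AddCommGroup N] [Module R N] {f : M →ₗ[R] N}

theorem nontrivial_s5 (hf : IsIrreducibleHom f) : Nontrivial N := by
  by_contra h
  rw [not_nontrivial_iff_subsingleton] at h
  exact hf.2.1 ⟨0, Subsingleton.elim _ _⟩

theorem comp_linearEquiv (hf : IsIrreducibleHom f) {M' : Type u} [AddCommGroup M'] [Module R M']
    (e : M' ≃ₗ[R] M) : IsIrreducibleHom (f ∘ₗ e.toLinearMap) := by
  obtain ⟨hmono, hepi, hfac⟩ := hf
  refine ⟨fun ⟨r, hr⟩ => hmono ⟨e.toLinearMap ∘ₗ r, ?_⟩,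
    fun ⟨s, hs⟩ => hepi ⟨e.toLinearMap ∘ₗ s, hs⟩, ?_⟩
  · ext x
    simpa using congrArg e (LinearMap.congr_fun hr (e.symm x))
  · intro L _ _ hL g h hgh
    have hφ : h ∘ₗ (g ∘ₗ e.symm.toLinearMap) = f := by
      rw [← comp_assoc, hgh, comp_assoc, LinearEquiv.comp_coe, e.symm_trans_self]
      rfl
    refine (hfac L hL _ h hφ).imp (fun ⟨r, hr⟩ => ⟨e.symm.toLinearMap ∘ₗ r, ?_⟩) id
    ext x
    simpa using congrArg e.symm (LinearMap.congr_fun hr (e x))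

theorem bijective_of_comp_surjective [Module.Projective R M] (hf : IsIrreducibleHom f)
    {ι : R →ₗ[R] M} (hι : ∃ r : M →ₗ[R] R, r ∘ₗ ι = LinearMap.id)
    (hfι : Function.Surjective (f ∘ₗ ι)) : Function.Bijective ι := by
  obtain ⟨r, hr⟩ := hι
  obtain ⟨ψ, hψ⟩ := Module.projective_lifting_property (f ∘ₗ ι) f hfι
  obtain ⟨ρ, hρ⟩ : ∃ ρ : R →ₗ[R] M, ρ ∘ₗ ψ = LinearMap.id := by
    refine (hf.2.2 R (Module.Finite.self R) ψ (f ∘ₗ ι) hψ).resolve_right ?_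
    rintro ⟨s, hs⟩
    exact hf.2.1 ⟨ι ∘ₗ s, hs⟩
  have hψι : (ψ ∘ₗ ι) ∘ₗ (r ∘ₗ ρ) = LinearMap.id := by
    rw [comp_comm_ring, comp_assoc, ← comp_assoc ι ψ ρ, hρ, id_comp, hr]
  have hsurj : Function.Surjective (ψ ∘ₗ ι) :=
    fun x => ⟨(r ∘ₗ ρ) x, LinearMap.congr_fun hψι x⟩
  exact ⟨injective_of_comp_eq_id ι r hr,
    Function.Surjective.of_comp_left (f := ψ) hsurj (injective_of_comp_eq_id ψ ρ hρ)⟩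

theorem ker_ne_bot (hf : IsIrreducibleHom f) (hsurj : Function.Surjective f) : ker f ≠ ⊥ :=
  fun h =>
    let e := LinearEquiv.ofBijective f ⟨ker_eq_bot.mp h, hsurj⟩
    hf.2.1 ⟨e.symm.toLinearMap, LinearMap.ext e.apply_symm_apply⟩

end IsIrreducibleHom

theorem IsLocalRing.isUnit_of_mul_ne_zero_of_mem_annihilator {R : Type*} [CommRing R]
    [IsLocalRing R] {x q : R} (hx : x ∈ (maximalIdeal R).annihilator) (hqx : q * x ≠ 0) :
    IsUnit q := by
  by_contra hq
  exact hqx (by simpa [mul_comm] using mem_annihilator.mp hx q ((mem_maximalIdeal q).2 hq))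

theorem IsLocalRing.nonempty_annihilator_maximalIdeal_equiv_residueField {R : Type*}
    [CommRing R] [IsLocalRing R] {z : R} (hz0 : z ≠ 0)
    (hz : (maximalIdeal R).annihilator = R ∙ z) :
    Nonempty ((maximalIdeal R).annihilator ≃ₗ[R] ResidueField R) := by
  have hzm : z ∈ (maximalIdeal R).annihilator := hz ▸ mem_span_singleton_self z
  have htors : maximalIdeal R = Ideal.torsionOf R R z :=
    (maximalIdeal.isMaximal R).eq_of_le (by rwa [Ne, Ideal.torsionOf_eq_top_iff])
      fun t ht => (Ideal.mem_torsionOf_iff z t).2 (by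
        simpa [mul_comm] using mem_annihilator.mp hzm t ht)
  exact ⟨(LinearEquiv.ofEq _ _ hz).trans <|
    (Ideal.quotTorsionOfEquivSpanSingleton R R z).symm.trans (quotEquivOfEq _ _ htors.symm)⟩

theorem IsLocalRing.mem_span_singleton_of_mem_annihilator {R : Type*} [CommRing R]
    [IsLocalRing R] {x z : R} (hx : x ∈ (maximalIdeal R).annihilator) (hzx : z ∈ R ∙ x)
    (hz0 : z ≠ 0) : x ∈ R ∙ z := by
  obtain ⟨q, rfl⟩ := mem_span_singleton.1 hzx
  rw [span_singleton_smul_eq (isUnit_of_mul_ne_zero_of_mem_annihilator hx hz0)]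
  exact mem_span_singleton_self x

theorem mem_span_singleton_of_inl_retraction {R : Type*} [CommRing R] {z x : R}
    {r : (R × R) ⧸ (R ∙ ((z, -x) : R × R)) →ₗ[R] R}
    (hr : r ∘ₗ (R ∙ ((z, -x) : R × R)).mkQ ∘ₗ inl R R R = LinearMap.id) :
    z ∈ R ∙ x := by
  have hr1 : r (mkQ _ (1, 0)) = 1 := LinearMap.congr_fun hr 1
  have h0 : r (mkQ _ (z • (1, 0) + (-x) • (0, 1))) = 0 := by
    rw [mkQ_apply, (Quotient.mk_eq_zero _).2 (by simp),
      map_zero]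
  rw [map_add, map_smul, map_smul, map_add, map_smul, map_smul, hr1, smul_eq_mul,
    smul_eq_mul, mul_one] at h0
  exact mem_span_singleton.2 ⟨r (mkQ _ (0, 1)), by rw [smul_eq_mul]; linear_combination -h0⟩

namespace IsIrreducibleHom

variable {R : Type u} [CommRing R] [IsLocalRing R] {M : Type u} [AddCommGroup M] [Module R M]
  {π : R →ₗ[R] M}

theorem ker_le_maximalIdeal (hπ : IsIrreducibleHom π) (hsurj : Function.Surjective π) :
    ker π ≤ maximalIdeal R := by
  have := hπ.nontrivial_s5
  refine le_maximalIdeal fun htop => ?_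
  obtain ⟨m, hm⟩ := exists_ne (0 : M)
  obtain ⟨c, rfl⟩ := hsurj m
  exact hm (mem_ker.mp (htop ▸ mem_top))

theorem ker_le_of_le_ker (hπ : IsIrreducibleHom π) (hsurj : Function.Surjective π)
    {J : Ideal R} (hJ : J ≤ ker π) (hJ0 : J ≠ ⊥) : ker π ≤ J := by
  rcases hπ.2.2 (R ⧸ J) inferInstance J.mkQ (J.liftQ π hJ) (J.liftQ_mkQ π hJ) with
    ⟨r, hr⟩ | ⟨s, hs⟩
  · obtain ⟨x, hxJ, hx0⟩ := exists_mem_ne_zero_of_ne_bot hJ0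
    have hx := LinearMap.congr_fun hr x
    rw [comp_apply, mkQ_apply, (Quotient.mk_eq_zero J).2 hxJ, map_zero] at hx
    exact absurd hx.symm hx0
  obtain ⟨c, hc⟩ := J.mkQ_surjective (s (π 1))
  have hc1 : c - 1 ∈ ker π := by
    have := LinearMap.congr_fun hs (π 1)
    rw [comp_apply, ← hc, mkQ_apply, liftQ_apply] at this
    simp [this]
  have hcu : IsUnit c := Ideal.isUnit_of_sub_one_mem_jacobson_bot c
    (maximalIdeal_le_jacobson _ (ker_le_maximalIdeal hπ hsurj hc1))
  have hsπ (i : R) : s (π i) = J.mkQ (i * c) := by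
    rw [mkQ_apply, ← smul_eq_mul, Quotient.mk_smul, ← mkQ_apply, hc, ← map_smul, ← map_smul,
      smul_eq_mul, mul_one]
  intro i hi
  rw [← Ideal.mul_unit_mem_iff_mem J hcu, ← Quotient.mk_eq_zero J, ← mkQ_apply, ← hsπ,
    mem_ker.mp hi, map_zero]

theorem exists_ker_eq_span_singleton (hπ : IsIrreducibleHom π)
    (hsurj : Function.Surjective π) : ∃ z ≠ (0 : R), ker π = R ∙ z := by
  obtain ⟨z, hz, hz0⟩ := exists_mem_ne_zero_of_ne_bot (hπ.ker_ne_bot hsurj)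
  have hzk : R ∙ z ≤ ker π := (span_singleton_le_iff_mem z _).2 hz
  exact ⟨z, hz0, le_antisymm (hπ.ker_le_of_le_ker hsurj hzk (by simpa using hz0)) hzk⟩

theorem ker_le_annihilator_maximalIdeal (hπ : IsIrreducibleHom π)
    (hsurj : Function.Surjective π) : ker π ≤ (maximalIdeal R).annihilator := by
  obtain ⟨z, -, hz⟩ := hπ.exists_ker_eq_span_singleton hsurj
  rw [le_annihilator_iff, Ideal.smul_eq_mul, mul_comm, ← Ideal.smul_eq_mul]
  by_contra hne
  exact hπ.ker_ne_bot hsurj <| eq_bot_of_le_smul_of_le_jacobson_bot _ _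
    (hz ▸ fg_span_singleton z) (hπ.ker_le_of_le_ker hsurj smul_le_right hne)
    (maximalIdeal_le_jacobson _)

theorem annihilator_maximalIdeal_le_ker (hπ : IsIrreducibleHom π)
    (hsurj : Function.Surjective π) : (maximalIdeal R).annihilator ≤ ker π := by
  obtain ⟨z, hz0, hz⟩ := hπ.exists_ker_eq_span_singleton hsurj
  have hzk : z ∈ ker π := hz ▸ mem_span_singleton_self z
  have hzm : z ∈ (maximalIdeal R).annihilator := hπ.ker_le_annihilator_maximalIdeal hsurj hzk
  intro x hx
  by_contra hxk
  let W : Submodule R (R × R) := R ∙ (z, -x)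
  have hW : W ≤ ker (π ∘ₗ fst R R R) :=
    (span_singleton_le_iff_mem _ _).2 (by simpa using hzk)
  rcases hπ.2.2 ((R × R) ⧸ W) inferInstance (W.mkQ ∘ₗ inl R R R) (W.liftQ _ hW)
    (by ext; simp) with ⟨r, hr⟩ | ⟨s, hs⟩
  · exact hxk <| hz ▸ mem_span_singleton_of_mem_annihilator hx
      (mem_span_singleton_of_inl_retraction hr) hz0
  obtain ⟨⟨a, b⟩, hab⟩ := W.mkQ_surjective (s (π 1))
  have hπa : π a = π 1 := by
    simpa [← hab] using LinearMap.congr_fun hs (π 1)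
  have hza : z * a = z := by
    have ha : a - 1 ∈ maximalIdeal R :=
      hπ.ker_le_maximalIdeal hsurj (by rw [mem_ker, map_sub, hπa, sub_self])
    linear_combination mem_annihilator.mp hzm _ ha
  obtain ⟨c, hc⟩ : ∃ c : R, c • ((z, -x) : R × R) = (z * a, z * b) := by
    have : z • s (π 1) = 0 := by
      rw [← map_smul, ← map_smul, smul_eq_mul, mul_one, mem_ker.mp hzk, map_zero]
    rw [← hab, mkQ_apply, ← Quotient.mk_smul, Quotient.mk_eq_zero] at this
    exact mem_span_singleton.1 (by simpa using this)
  simp only [Prod.smul_mk, smul_eq_mul, Prod.mk.injEq, hza] at hc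
  have hcu : IsUnit c := isUnit_of_mul_ne_zero_of_mem_annihilator hzm (by rwa [hc.1])
  refine hxk <| (Ideal.mul_unit_mem_iff_mem _ hcu).1 (hz ▸ ?_)
  rw [show x * c = -b * z by linear_combination -hc.2]
  exact Submodule.smul_mem _ _ (mem_span_singleton_self z)

theorem ker_eq_annihilator_maximalIdeal (hπ : IsIrreducibleHom π)
    (hsurj : Function.Surjective π) : ker π = (maximalIdeal R).annihilator :=
  le_antisymm (hπ.ker_le_annihilator_maximalIdeal hsurj)
    (hπ.annihilator_maximalIdeal_le_ker hsurj)

end IsIrreducibleHom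

theorem type_one_of_comp_split_mono_surjective_general
    {R : Type u} [CommRing R] [IsLocalRing R]
    {F M : Type u} [AddCommGroup F] [Module R F] [Module.Free R F]
    [AddCommGroup M] [Module R M]
    (φ : F →ₗ[R] M) (hirr : IsIrreducibleHom φ)
    (ι : R →ₗ[R] F) (hι : ∃ r : F →ₗ[R] R, r ∘ₗ ι = LinearMap.id)
    (hφι : Function.Surjective (φ ∘ₗ ι)) :
    Nonempty ((Submodule.annihilator (IsLocalRing.maximalIdeal R)) ≃ₗ[R]
        (IsLocalRing.ResidueField R)) ∧
    Function.Bijective ι ∧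
    ∃ ρ : (R ⧸ Submodule.annihilator (IsLocalRing.maximalIdeal R)) ≃ₗ[R] M,
      ρ.toLinearMap ∘ₗ (Submodule.annihilator (IsLocalRing.maximalIdeal R)).mkQ = φ ∘ₗ ι := by
  have hbij : Function.Bijective ι := hirr.bijective_of_comp_surjective hι hφι
  have hπ : IsIrreducibleHom (φ ∘ₗ ι) := hirr.comp_linearEquiv (.ofBijective ι hbij)
  have hker := hπ.ker_eq_annihilator_maximalIdeal hφι
  obtain ⟨z, hz0, hz⟩ := hπ.exists_ker_eq_span_singleton hφι
  exact ⟨nonempty_annihilator_maximalIdeal_equiv_residueField hz0 (hker ▸ hz), hbij,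
    (quotEquivOfEq _ _ hker.symm).trans ((φ ∘ₗ ι).quotKerEquivOfSurjective hφι), rfl⟩

/-- Let `φ : F → M` be an irreducible epimorphism of finitely generated modules over a
commutative noetherian local ring `(R, 𝔪, k)` with `F` free, assume `End_R(M)` is local,
let `ι : R → F` be a split monomorphism, and suppose `φ ∘ ι` is surjective. Then
`Soc R = (0 :_R 𝔪)` is one-dimensional over `k` (i.e. `Soc R ≅ k`), `ι` is an isomorphism
(so `F` has rank one), and there is an isomorphism `ρ : R / Soc R → M` with
`φ ∘ ι = ρ ∘ π` for the natural surjection `π : R → R / Soc R`. -/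
theorem type_one_of_comp_split_mono_surjective
    {R : Type u} [CommRing R] [IsNoetherianRing R] [IsLocalRing R]
    {F M : Type u} [AddCommGroup F] [Module R F] [Module.Finite R F] [Module.Free R F]
    [AddCommGroup M] [Module R M] [Module.Finite R M]
    (φ : F →ₗ[R] M) (hsurj : Function.Surjective φ) (hirr : IsIrreducibleHom φ)
    (hEnd : IsLocalRing (Module.End R M))
    (ι : R →ₗ[R] F) (hι : ∃ r : F →ₗ[R] R, r ∘ₗ ι = LinearMap.id)
    (hφι : Function.Surjective (φ ∘ₗ ι)) :
    Nonempty ((Submodule.annihilator (IsLocalRing.maximalIdeal R)) ≃ₗ[R]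
        (IsLocalRing.ResidueField R)) ∧
    Function.Bijective ι ∧
    ∃ ρ : (R ⧸ Submodule.annihilator (IsLocalRing.maximalIdeal R)) ≃ₗ[R] M,
      ρ.toLinearMap ∘ₗ (Submodule.annihilator (IsLocalRing.maximalIdeal R)).mkQ = φ ∘ₗ ι :=
  type_one_of_comp_split_mono_surjective_general φ hirr ι hι hφι
end

section
/- Let (R, m, k) be a commutative noetherian local ring and let f : M → N be a homomorphism of finitely generated R-modules. Then the following are equivalent: (i) f is irreducible; (ii) for every finitely generated R-module X, the homomorphism f ⊕ id_X : M ⊕ X → N ⊕ X is irreducible; (iii) there exists a finitely generated R-module X such that f ⊕ id_X : M ⊕ X → N ⊕ X is irreducible. -/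
/-
Split monomorphisms and split epimorphisms are stable under `⊕ id_X` in both directions, which
settles the first two conditions. For the factorization condition, a factorization of `f` yields
one of `f ⊕ id_X` by adding `id_X`. Conversely, if `f ⊕ id_X = h ∘ g` through `L`, then
`snd ∘ h : L → X` is split by `g ∘ inr`, so `L ≅ K ⊕ X` with `K = ker (snd ∘ h)`, and under this
isomorphism `g` and `h` become `g' ⊕ id_X` and `h' ⊕ id_X` for a factorization `f = h' ∘ g'`
through `K`, which is finitely generated as a direct summand of `L`.
-/

universe u

namespace LinearMap

section Semiring

variable {R : Type*} [Semiring R] {M N M' N' : Type*}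
  [AddCommMonoid M] [Module R M] [AddCommMonoid N] [Module R N]
  [AddCommMonoid M'] [Module R M'] [AddCommMonoid N'] [Module R N']

theorem prodMap_comp_prodMap_eq_id {f : M →ₗ[R] N} {r : N →ₗ[R] M} {g : M' →ₗ[R] N'}
    {r' : N' →ₗ[R] M'} (hr : r ∘ₗ f = id) (hr' : r' ∘ₗ g = id) :
    r.prodMap r' ∘ₗ f.prodMap g = id := by
  rw [prodMap_comp, hr, hr', prodMap_id]

theorem exists_retraction_of_prodMap {f : M →ₗ[R] N} {g : M' →ₗ[R] N'}
    (h : ∃ r : N × N' →ₗ[R] M × M', r ∘ₗ f.prodMap g = id) :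
    ∃ r : N →ₗ[R] M, r ∘ₗ f = id := by
  obtain ⟨r, hr⟩ := h
  refine ⟨fst R M M' ∘ₗ r ∘ₗ inl R N N', LinearMap.ext fun m => ?_⟩
  simpa using congrArg Prod.fst (LinearMap.congr_fun hr (m, 0))

theorem exists_section_of_prodMap {f : M →ₗ[R] N} {g : M' →ₗ[R] N'}
    (h : ∃ s : N × N' →ₗ[R] M × M', f.prodMap g ∘ₗ s = id) :
    ∃ s : N →ₗ[R] M, f ∘ₗ s = id := by
  obtain ⟨s, hs⟩ := h
  refine ⟨fst R M M' ∘ₗ s ∘ₗ inl R N N', LinearMap.ext fun n => ?_⟩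
  simpa using congrArg Prod.fst (LinearMap.congr_fun hs (n, 0))

end Semiring

theorem exists_prodMap_id_of_comp_eq_prodMap_id {R : Type*} [Ring R] {M N X L : Type*}
    [AddCommGroup M] [Module R M] [AddCommGroup N] [Module R N]
    [AddCommGroup X] [Module R X] [AddCommGroup L] [Module R L]
    {f : M →ₗ[R] N} {g : M × X →ₗ[R] L} {h : L →ₗ[R] N × X} (hgh : h ∘ₗ g = f.prodMap id) :
    ∃ (K : Submodule R L) (e : L ≃ₗ[R] K × X) (g' : M →ₗ[R] K) (h' : K →ₗ[R] N),
      h' ∘ₗ g' = f ∧ e.toLinearMap ∘ₗ g = g'.prodMap id ∧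
        h ∘ₗ e.symm.toLinearMap = h'.prodMap id := by
  have hgh_apply (m : M) (x : X) : h (g (m, x)) = (f m, x) := by
    simpa using LinearMap.congr_fun hgh (m, x)
  have split : (snd R N X ∘ₗ h) ∘ₗ (g ∘ₗ inr R M X) = LinearMap.id :=
    LinearMap.ext fun x => by simp [hgh_apply]
  let splitting := (exact_subtype_ker_map (snd R N X ∘ₗ h)).splitSurjectiveEquiv
    (ker (snd R N X ∘ₗ h)).injective_subtype
  let e := (splitting ⟨_, split⟩).1
  have he_symm_inl (k : ker (snd R N X ∘ₗ h)) : e.symm (k, 0) = k :=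
    (LinearMap.congr_fun (splitting ⟨_, split⟩).2.1 k).symm
  have he_symm_inr (x : X) : e.symm (0, x) = g (0, x) :=
    LinearMap.congr_fun (congrArg Subtype.val (splitting.symm_apply_apply ⟨_, split⟩)) x
  have hg_inl (m : M) : g (m, 0) ∈ ker (snd R N X ∘ₗ h) := by simp [hgh_apply]
  refine ⟨_, e, (g ∘ₗ inl R M X).codRestrict _ hg_inl, fst R N X ∘ₗ h ∘ₗ Submodule.subtype _,
    LinearMap.ext fun m => ?_, prod_ext (LinearMap.ext fun m => ?_) (LinearMap.ext fun x => ?_),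
    prod_ext (LinearMap.ext fun k => ?_) (LinearMap.ext fun x => ?_)⟩
  · exact congrArg Prod.fst (hgh_apply m 0)
  · exact e.eq_symm_apply.mp (he_symm_inl ⟨_, hg_inl m⟩).symm
  · simpa using e.eq_symm_apply.mp (he_symm_inr x).symm
  · simpa [he_symm_inl] using (Prod.ext rfl k.2 : h k = ((h k).1, 0))
  · simp [he_symm_inr, hgh_apply]

end LinearMap

open LinearMap

section

variable {R : Type u} [CommRing R] {M N : Type u} [AddCommGroup M] [Module R M]
  [AddCommGroup N] [Module R N] {f : M →ₗ[R] N}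

theorem IsIrreducibleHom.prodMap_id (hf : IsIrreducibleHom f) (X : Type u) [AddCommGroup X]
    [Module R X] : IsIrreducibleHom (f.prodMap (LinearMap.id (R := R) (M := X))) := by
  obtain ⟨not_mono, not_epi, factor⟩ := hf
  refine ⟨fun h => not_mono (exists_retraction_of_prodMap h),
    fun h => not_epi (exists_section_of_prodMap h), fun L _ _ _ g h hgh => ?_⟩
  obtain ⟨K, e, g', h', hgh', hg, hh⟩ := exists_prodMap_id_of_comp_eq_prodMap_id hgh
  have hK : Module.Finite R K :=
    .of_surjective (fst R K X ∘ₗ e.toLinearMap) (Prod.fst_surjective.comp e.surjective)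
  rcases factor K hK g' h' hgh' with ⟨r, hr⟩ | ⟨s, hs⟩
  · refine .inl ⟨r.prodMap id ∘ₗ e.toLinearMap, ?_⟩
    rw [comp_assoc, hg, prodMap_comp_prodMap_eq_id hr (id_comp id)]
  · refine .inr ⟨e.symm.toLinearMap ∘ₗ s.prodMap id, ?_⟩
    rw [← comp_assoc, hh, prodMap_comp_prodMap_eq_id hs (id_comp id)]

theorem IsIrreducibleHom.of_prodMap_id {X : Type u} [AddCommGroup X] [Module R X]
    [Module.Finite R X] (hF : IsIrreducibleHom (f.prodMap (LinearMap.id (R := R) (M := X)))) :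
    IsIrreducibleHom f := by
  obtain ⟨not_mono, not_epi, factor⟩ := hF
  refine ⟨fun ⟨r, hr⟩ => not_mono ⟨r.prodMap id, prodMap_comp_prodMap_eq_id hr (id_comp id)⟩,
    fun ⟨s, hs⟩ => not_epi ⟨s.prodMap id, prodMap_comp_prodMap_eq_id hs (id_comp id)⟩,
    fun L _ _ _ g h hgh => ?_⟩
  rcases factor (L × X) inferInstance (g.prodMap id) (h.prodMap id)
    (by rw [prodMap_comp, hgh, id_comp]) with hg | hh
  · exact .inl (exists_retraction_of_prodMap hg)
  · exact .inr (exists_section_of_prodMap hh)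

end

theorem irreducible_iff_prodMap_id_irreducible_general
    {R : Type u} [CommRing R]
    {M N : Type u} [AddCommGroup M] [Module R M]
    [AddCommGroup N] [Module R N]
    (f : M →ₗ[R] N) :
    (IsIrreducibleHom f ↔
      ∀ (X : Type u) [AddCommGroup X] [Module R X], Module.Finite R X →
        IsIrreducibleHom (f.prodMap (LinearMap.id (R := R) (M := X)))) ∧
    (IsIrreducibleHom f ↔
      ∃ (X : Type u) (_ : AddCommGroup X) (_ : Module R X), Module.Finite R X ∧
        IsIrreducibleHom (f.prodMap (LinearMap.id (R := R) (M := X)))) := by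
  have of_exists : (∃ (X : Type u) (_ : AddCommGroup X) (_ : Module R X), Module.Finite R X ∧
      IsIrreducibleHom (f.prodMap (LinearMap.id (R := R) (M := X)))) → IsIrreducibleHom f :=
    fun ⟨_, _, _, _, hF⟩ => hF.of_prodMap_id
  refine ⟨⟨fun hf X _ _ _ => hf.prodMap_id X, fun hF => of_exists ?_⟩,
    ⟨fun hf => ⟨PUnit, inferInstance, inferInstance, inferInstance, hf.prodMap_id PUnit⟩,
      of_exists⟩⟩
  exact ⟨PUnit, inferInstance, inferInstance, inferInstance, hF PUnit inferInstance⟩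

/-- For a homomorphism `f : M → N` of finitely generated modules over a commutative
noetherian local ring, the following are equivalent: (i) `f` is irreducible;
(ii) `f ⊕ id_X` is irreducible for every finitely generated module `X`;
(iii) `f ⊕ id_X` is irreducible for some finitely generated module `X`. -/
theorem irreducible_iff_prodMap_id_irreducible
    {R : Type u} [CommRing R] [IsNoetherianRing R] [IsLocalRing R]
    {M N : Type u} [AddCommGroup M] [Module R M] [Module.Finite R M]
    [AddCommGroup N] [Module R N] [Module.Finite R N]
    (f : M →ₗ[R] N) :
    (IsIrreducibleHom f ↔
      ∀ (X : Type u) [AddCommGroup X] [Module R X], Module.Finite R X →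
        IsIrreducibleHom (f.prodMap (LinearMap.id (R := R) (M := X)))) ∧
    (IsIrreducibleHom f ↔
      ∃ (X : Type u) (_ : AddCommGroup X) (_ : Module R X), Module.Finite R X ∧
        IsIrreducibleHom (f.prodMap (LinearMap.id (R := R) (M := X)))) :=
  irreducible_iff_prodMap_id_irreducible_general f
end

section
/- Let (R, m, k) be a commutative noetherian local ring, let f : M → N be a homomorphism of finitely generated R-modules, and let n be a positive integer. If the direct sum map f^{⊕n} : M^{⊕n} → N^{⊕n} (applying f coordinatewise) is irreducible, then n = 1. -/
/-!
For two distinct indices `i₀ ≠ i₁`, the map `f^{⊕ι}` factors through `M × N^ι` as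
`x ↦ (x i₀, f ∘ x)` followed by `(m, y) ↦ y` with its `i₀`-th entry replaced by `f m`.
A retraction of the first factor, read off at the coordinate `i₁`, is a retraction of `f`;
a section of the second factor, read off at the coordinate `i₀`, is a section of `f`.
Either way `f^{⊕ι}` splits, so irreducibility forces the index type to be a subsingleton;
it is nonempty because for empty `ι` the map `f^{⊕ι}` is an isomorphism of zero modules.
-/

universe u

open LinearMap

theorem LinearMap.piMap_comp_piMap {R : Type*} [Semiring R] {ι : Type*} {φ ψ χ : ι → Type*}
    [∀ i, AddCommMonoid (φ i)] [∀ i, Module R (φ i)] [∀ i, AddCommMonoid (ψ i)]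
    [∀ i, Module R (ψ i)] [∀ i, AddCommMonoid (χ i)] [∀ i, Module R (χ i)]
    (g : ∀ i, ψ i →ₗ[R] χ i) (f : ∀ i, φ i →ₗ[R] ψ i) :
    piMap g ∘ₗ piMap f = piMap fun i => g i ∘ₗ f i :=
  rfl

theorem LinearMap.piMap_id {R : Type*} [Semiring R] {ι : Type*} {φ : ι → Type*}
    [∀ i, AddCommMonoid (φ i)] [∀ i, Module R (φ i)] :
    piMap (fun i => (LinearMap.id : φ i →ₗ[R] φ i)) = LinearMap.id :=
  rfl

variable {R : Type u} [CommRing R] {M N : Type u} [AddCommGroup M] [Module R M]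
  [AddCommGroup N] [Module R N]

theorem IsIrreducibleHom.nontrivial_domain {f : M →ₗ[R] N} (hf : IsIrreducibleHom f) :
    Nontrivial M := by
  by_contra h
  rw [not_nontrivial_iff_subsingleton] at h
  exact hf.1 ⟨0, Subsingleton.elim _ _⟩

theorem IsIrreducibleHom.nonempty_of_piMap {ι : Type} {f : M →ₗ[R] N}
    (hf : IsIrreducibleHom (piMap fun _ : ι => f)) : Nonempty ι := by
  by_contra h
  rw [not_nonempty_iff] at h
  exact not_nontrivial (ι → M) hf.nontrivial_domain

section Factorization

variable {ι : Type*} [DecidableEq ι] (f : M →ₗ[R] N) (i₀ : ι)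

def piMapFactorFst : (ι → M) →ₗ[R] M × (ι → N) :=
  (proj i₀).prod (piMap fun _ => f)

def piMapFactorSnd : M × (ι → N) →ₗ[R] ι → N :=
  snd R M (ι → N) + single R (fun _ => N) i₀ ∘ₗ (f ∘ₗ fst R M (ι → N) - proj i₀ ∘ₗ snd R M _)

theorem piMapFactorSnd_apply (m : M) (y : ι → N) :
    piMapFactorSnd f i₀ (m, y) = Function.update y i₀ (f m) := by
  ext i
  by_cases hi : i = i₀
  · subst hi
    simp [piMapFactorSnd]
  · simp [piMapFactorSnd, hi]

theorem piMapFactorSnd_comp_piMapFactorFst :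
    piMapFactorSnd f i₀ ∘ₗ piMapFactorFst f i₀ = piMap fun _ => f := by
  ext1 x
  rw [comp_apply, piMapFactorFst, prod_apply, piMapFactorSnd_apply]
  exact Function.update_eq_self i₀ _

theorem exists_retraction_of_piMapFactorFst {i₁ : ι} (hne : i₁ ≠ i₀)
    {r : M × (ι → N) →ₗ[R] ι → M} (hr : r ∘ₗ piMapFactorFst f i₀ = LinearMap.id) :
    ∃ t : N →ₗ[R] M, t ∘ₗ f = LinearMap.id := by
  refine ⟨proj i₁ ∘ₗ r ∘ₗ inr R M (ι → N) ∘ₗ single R (fun _ => N) i₁, ?_⟩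
  ext m
  have hsingle : piMapFactorFst f i₀ (Pi.single i₁ m) = (0, Pi.single i₁ (f m)) := by
    ext i
    · simp [piMapFactorFst, hne.symm]
    · by_cases hi : i = i₁
      · subst hi
        simp [piMapFactorFst]
      · simp [piMapFactorFst, hi]
  simp only [comp_apply, single_apply, inr_apply, proj_apply, id_apply]
  rw [← hsingle, ← comp_apply (f := r), hr, id_apply, Pi.single_eq_same]

theorem exists_section_of_piMapFactorSnd
    {s : (ι → N) →ₗ[R] M × (ι → N)} (hs : piMapFactorSnd f i₀ ∘ₗ s = LinearMap.id) :
    ∃ t : N →ₗ[R] M, f ∘ₗ t = LinearMap.id := by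
  refine ⟨fst R M (ι → N) ∘ₗ s ∘ₗ single R (fun _ => N) i₀, ?_⟩
  ext y
  have key := congr_fun (LinearMap.congr_fun hs (Pi.single i₀ y)) i₀
  rw [comp_apply, ← Prod.mk.eta (p := s _), piMapFactorSnd_apply] at key
  simpa using key

end Factorization

-- `ι : Type` keeps `M × (ι → N)` in `Type u`, where the factorizations are tested.
theorem IsIrreducibleHom.subsingleton_of_piMap {ι : Type} [Finite ι] [Module.Finite R M]
    [Module.Finite R N] {f : M →ₗ[R] N} (hf : IsIrreducibleHom (piMap fun _ : ι => f)) :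
    Subsingleton ι := by
  classical
  refine ⟨fun i₁ i₀ => by_contra fun hne => ?_⟩
  obtain ⟨hmono, hepi, hfactor⟩ := hf
  rcases hfactor _ inferInstance _ _ (piMapFactorSnd_comp_piMapFactorFst f i₀)
    with ⟨r, hr⟩ | ⟨s, hs⟩
  · obtain ⟨t, ht⟩ := exists_retraction_of_piMapFactorFst f i₀ hne hr
    exact hmono ⟨piMap fun _ => t, by rw [piMap_comp_piMap, ht, piMap_id]⟩
  · obtain ⟨t, ht⟩ := exists_section_of_piMapFactorSnd f i₀ hs
    exact hepi ⟨piMap fun _ => t, by rw [piMap_comp_piMap, ht, piMap_id]⟩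

theorem eq_one_of_pow_irreducible_general
    {R : Type u} [CommRing R]
    {M N : Type u} [AddCommGroup M] [Module R M] [Module.Finite R M]
    [AddCommGroup N] [Module R N] [Module.Finite R N]
    (f : M →ₗ[R] N) (n : ℕ)
    (hirr : IsIrreducibleHom
      (LinearMap.pi (fun i : Fin n => f ∘ₗ LinearMap.proj i) :
        (Fin n → M) →ₗ[R] (Fin n → N))) :
    n = 1 := by
  have hpos := Fintype.card_pos_iff.mpr (IsIrreducibleHom.nonempty_of_piMap hirr)
  have hle :=
    Fintype.card_le_one_iff_subsingleton.mpr (IsIrreducibleHom.subsingleton_of_piMap hirr)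
  rw [Fintype.card_fin] at hpos hle
  omega

/-- If `f : M → N` is a homomorphism of finitely generated modules over a commutative
noetherian local ring and `n` is a positive integer such that the coordinatewise map
`f^{⊕n} : M^{⊕n} → N^{⊕n}` is irreducible, then `n = 1`. -/
theorem eq_one_of_pow_irreducible
    {R : Type u} [CommRing R] [IsNoetherianRing R] [IsLocalRing R]
    {M N : Type u} [AddCommGroup M] [Module R M] [Module.Finite R M]
    [AddCommGroup N] [Module R N] [Module.Finite R N]
    (f : M →ₗ[R] N) (n : ℕ) (hn : 0 < n)
    (hirr : IsIrreducibleHom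
      (LinearMap.pi (fun i : Fin n => f ∘ₗ LinearMap.proj i) :
        (Fin n → M) →ₗ[R] (Fin n → N))) :
    n = 1 :=
  eq_one_of_pow_irreducible_general f n hirr
end

section
/- Let (R, xR) be a discrete valuation ring with maximal ideal generated by x, let θ : xR → R be the inclusion map, and let φ : M → F be a monomorphism of finitely generated R-modules with F free such that the image of φ is contained in (xR)·F. Then the following are equivalent: (i) φ is irreducible; (ii) there exist isomorphisms η : M → xR and π : F → R such that θ ∘ η = π ∘ φ. -/
universe u

/-!
Since `im φ ⊆ xF` and `F` is torsion-free, `φ = x • ψ`. Irreducibility applied to the two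
factorizations `φ = (x • 1_F) ∘ ψ = ψ ∘ (x • 1_M)` makes `ψ` split mono and split epi (the
alternatives would give `F = xF` or `M = xM`, impossible by Nakayama), so `ψ` is an isomorphism
and `x • 1_F` is itself irreducible. If `F` had two basis vectors `eᵢ ≠ eⱼ`, then `x • 1_F` would
factor as `k ∘ g` with `g` multiplying only `eᵢ` by `x` and `k` multiplying all the others by `x`,
with neither factor split; hence `F ≅ R` and `φ` is equivalent to `θ`.

Conversely `θ : 𝔪 → R` is irreducible for every local ring that is not a field: in a factorization
`θ = k ∘ g`, either `k` is onto, and splits because `R` is free, or its image lies in `𝔪`, and then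
`k`, corestricted to `𝔪`, is a retraction of `g`.
-/
open IsLocalRing Pointwise

section

variable {R : Type u} [CommRing R] {M N : Type u} [AddCommGroup M] [Module R M]
  [AddCommGroup N] [Module R N] {f : M →ₗ[R] N}

theorem IsIrreducibleHom.nontrivial_domain_s12 (h : IsIrreducibleHom f) : Nontrivial M := by
  by_contra hM
  rw [not_nontrivial_iff_subsingleton] at hM
  exact h.1 ⟨0, LinearMap.ext fun _ => Subsingleton.elim _ _⟩

theorem IsIrreducibleHom.nontrivial_codomain (h : IsIrreducibleHom f) : Nontrivial N := by
  by_contra hN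
  rw [not_nontrivial_iff_subsingleton] at hN
  exact h.2.1 ⟨0, LinearMap.ext fun _ => Subsingleton.elim _ _⟩

theorem IsIrreducibleHom.comp_linearEquiv_s12 (h : IsIrreducibleHom f) {M' : Type u}
    [AddCommGroup M'] [Module R M'] (e : M' ≃ₗ[R] M) :
    IsIrreducibleHom (f ∘ₗ e.toLinearMap) := by
  refine ⟨fun ⟨r, hr⟩ => h.1 ⟨e.toLinearMap ∘ₗ r, ?_⟩, fun ⟨s, hs⟩ => h.2.1 ⟨e.toLinearMap ∘ₗ s, hs⟩,
    fun L _ _ hL g k hkg => ?_⟩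
  · ext m
    simpa using congr(e ($hr (e.symm m)))
  · rcases h.2.2 L hL (g ∘ₗ e.symm.toLinearMap) k (by rw [← LinearMap.comp_assoc, hkg]; ext; simp)
      with ⟨r, hr⟩ | hk
    · exact .inl ⟨e.symm.toLinearMap ∘ₗ r, by ext m; simpa using congr(e.symm ($hr (e m)))⟩
    · exact .inr hk

theorem IsIrreducibleHom.linearEquiv_comp (h : IsIrreducibleHom f) {N' : Type u}
    [AddCommGroup N'] [Module R N'] (e : N ≃ₗ[R] N') :
    IsIrreducibleHom (e.toLinearMap ∘ₗ f) := by
  refine ⟨fun ⟨r, hr⟩ => h.1 ⟨r ∘ₗ e.toLinearMap, hr⟩, fun ⟨s, hs⟩ => h.2.1 ⟨s ∘ₗ e.toLinearMap, ?_⟩,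
    fun L _ _ hL g k hkg => ?_⟩
  · ext n
    simpa using congr(e.symm ($hs (e n)))
  · rcases h.2.2 L hL g (e.symm.toLinearMap ∘ₗ k) (by rw [LinearMap.comp_assoc, hkg]; ext; simp)
      with hg | ⟨s, hs⟩
    · exact .inl hg
    · exact .inr ⟨s ∘ₗ e.symm.toLinearMap, by ext n; simpa using congr(e ($hs (e.symm n)))⟩

theorem isIrreducibleHom_maximalIdeal_subtype [IsLocalRing R] (hm : maximalIdeal R ≠ ⊥) : IsIrreducibleHom (maximalIdeal R).subtype := by
  refine ⟨fun ⟨r, hr⟩ => hm ?_, fun ⟨s, hs⟩ => ?_, fun L _ _ _ g k hkg => ?_⟩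
  · refine (Submodule.eq_bot_iff _).2 fun y hy => ?_
    have hry : r y = ⟨y, hy⟩ := congr($hr ⟨y, hy⟩)
    have hyr : y • r 1 = ⟨y, hy⟩ := by rw [← hry, ← map_smul, smul_eq_mul, mul_one]
    have hya : y * (1 - r 1) = 0 := by
      rw [mul_sub, mul_one, sub_eq_zero]
      exact congr(Subtype.val $hyr).symm
    exact (isUnit_one_sub_self_of_mem_nonunits _ (r 1).2).mul_left_eq_zero.1 hya
  · have hs1 : ((s 1 : maximalIdeal R) : R) = 1 := congr($hs 1)
    exact (maximalIdeal.isMaximal R).ne_top ((Ideal.eq_top_iff_one _).2 (hs1 ▸ (s 1).2))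
  · by_cases hk : Function.Surjective k
    · exact .inr (Module.projective_lifting_property k LinearMap.id hk)
    · have hle : LinearMap.range k ≤ maximalIdeal R :=
        le_maximalIdeal fun htop => hk (LinearMap.range_eq_top.1 htop)
      refine .inl ⟨k.codRestrict _ fun l => hle ⟨l, rfl⟩, ?_⟩
      ext y
      exact congr($hkg y)

theorem LinearMap.exists_eq_smul_of_range_le {x : R} (hx : IsSMulRegular N x) {φ : M →ₗ[R] N}
    (h : LinearMap.range φ ≤ (Ideal.span {x} : Ideal R) • (⊤ : Submodule R N)) :
    ∃ ψ : M →ₗ[R] N, φ = x • ψ := by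
  let e := LinearEquiv.ofInjective (x • LinearMap.id : N →ₗ[R] N) fun _ _ hab => hx hab
  have hmem : ∀ m, φ m ∈ LinearMap.range (x • LinearMap.id : N →ₗ[R] N) := fun m => by
    obtain ⟨y, -, hy⟩ := (Submodule.mem_smul_pointwise_iff_exists _ _ _).1
      (Submodule.ideal_span_singleton_smul x (⊤ : Submodule R N) ▸ h ⟨m, rfl⟩)
    exact ⟨y, hy⟩
  refine ⟨e.symm.toLinearMap ∘ₗ φ.codRestrict _ hmem, LinearMap.ext fun m => ?_⟩
  have := congr(Subtype.val ($(e.apply_symm_apply (φ.codRestrict _ hmem m))))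
  simp only [e] at this
  exact this.symm

theorem subsingleton_of_surjective_smul [IsLocalRing R] [Module.Finite R M] {x : R}
    (hx : x ∈ maximalIdeal R) (h : Function.Surjective fun m : M => x • m) : Subsingleton M := by
  by_contra hM
  rw [not_subsingleton_iff_nontrivial] at hM
  refine Submodule.top_ne_pointwise_smul_of_mem_jacobson_annihilator (M := M)
    (maximalIdeal_le_jacobson _ hx) (eq_top_iff.2 fun m _ => ?_).symm
  obtain ⟨m', rfl⟩ := h m
  exact Submodule.smul_mem_pointwise_smul m' x ⊤ trivial

theorem IsIrreducibleHom.bijective_of_smul [IsLocalRing R] [Module.Finite R M] [Module.Finite R N]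
    {x : R} (hx : x ∈ maximalIdeal R) {ψ : M →ₗ[R] N} (h : IsIrreducibleHom (x • ψ)) :
    Function.Bijective ψ := by
  obtain ⟨r, hr⟩ : ∃ r : N →ₗ[R] M, r ∘ₗ ψ = LinearMap.id := by
    refine (h.2.2 N inferInstance ψ (x • LinearMap.id) (by ext; simp)).resolve_right
      fun ⟨s, hs⟩ => ?_
    have := h.nontrivial_codomain
    exact not_subsingleton N
      (subsingleton_of_surjective_smul hx fun n => ⟨s n, by simpa using congr($hs n)⟩)
  obtain ⟨s, hs⟩ : ∃ s : N →ₗ[R] M, ψ ∘ₗ s = LinearMap.id := by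
    refine (h.2.2 M inferInstance (x • LinearMap.id) ψ (by ext; simp)).resolve_left
      fun ⟨r', hr'⟩ => ?_
    have := h.nontrivial_domain_s12
    exact not_subsingleton M
      (subsingleton_of_surjective_smul hx fun m => ⟨r' m, by simpa using congr($hr' m)⟩)
  exact ⟨Function.LeftInverse.injective (g := r) fun m => congr($hr m),
    Function.RightInverse.surjective (f := ψ) (g := s) fun n => congr($hs n)⟩

theorem IsIrreducibleHom.subsingleton_of_basis [Module.Finite R N] {x : R} (hx : ¬IsUnit x)
    {ι : Type*} (b : Module.Basis ι R N) (h : IsIrreducibleHom (x • LinearMap.id : N →ₗ[R] N)) :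
    Subsingleton ι := by
  classical
  refine ⟨fun i j => by_contra fun hij => ?_⟩
  let g := b.constr R fun l => (if l = i then x else 1) • b l
  let k := b.constr R fun l => (if l = i then 1 else x) • b l
  have hkg : k ∘ₗ g = x • LinearMap.id := b.ext fun l => by
    by_cases hl : l = i <;> simp [g, k, hl]
  rcases h.2.2 N inferInstance g k hkg with ⟨r, hr⟩ | ⟨s, hs⟩
  · have hbi : b i = x • r (b i) := by simpa [g] using congr($hr (b i)).symm
    exact hx (IsUnit.of_mul_eq_one _ (by simpa using congr(b.coord i $hbi).symm))
  · have hcoord : b.coord j ∘ₗ k = x • b.coord j := b.ext fun l => by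
      by_cases hl : l = i <;> by_cases hlj : l = j <;> simp [k, hl, hlj, Ne.symm hij]
    have hbj : b.coord j (k (s (b j))) = 1 := by simpa using congr(b.coord j ($hs (b j)))
    have hxj := congr($hcoord (s (b j)))
    rw [LinearMap.comp_apply, hbj, LinearMap.smul_apply, smul_eq_mul] at hxj
    exact hx (IsUnit.of_mul_eq_one _ hxj.symm)

theorem IsIrreducibleHom.finrank_eq_one [Module.Free R N] [Module.Finite R N] {x : R}
    (hx : ¬IsUnit x) (h : IsIrreducibleHom (x • LinearMap.id : N →ₗ[R] N)) :
    Module.finrank R N = 1 := by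
  have := h.nontrivial_domain_s12
  have := Module.nontrivial R N
  have := h.subsingleton_of_basis hx (Module.Free.chooseBasis R N)
  rw [Module.finrank_eq_card_chooseBasisIndex]
  exact le_antisymm (Fintype.card_le_one_iff_subsingleton.2 this) Fintype.card_pos

end

theorem irreducible_mono_iff_equivalent_to_inclusion_of_dvr_general
    {R : Type u} [CommRing R] [IsDomain R] [IsDiscreteValuationRing R]
    (x : R) (hx : IsLocalRing.maximalIdeal R = Ideal.span {x})
    {M F : Type u} [AddCommGroup M] [Module R M] [Module.Finite R M]
    [AddCommGroup F] [Module R F] [Module.Finite R F] [Module.Free R F]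
    (φ : M →ₗ[R] F)
    (hrange : LinearMap.range φ ≤ (Ideal.span {x} : Ideal R) • (⊤ : Submodule R F)) :
    IsIrreducibleHom φ ↔
      ∃ (η : M ≃ₗ[R] (Ideal.span {x} : Ideal R)) (π : F ≃ₗ[R] R),
        ∀ z : M, ((Ideal.span {x} : Ideal R).subtype (η z)) = π (φ z) := by
  have hxm : x ∈ maximalIdeal R := hx ▸ Ideal.mem_span_singleton_self x
  have hx0 : x ≠ 0 := by
    rintro rfl
    exact IsDiscreteValuationRing.not_a_field R (by simpa using hx)
  constructor
  · intro hφ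
    obtain ⟨ψ, rfl⟩ := LinearMap.exists_eq_smul_of_range_le (IsSMulRegular.of_ne_zero hx0) hrange
    let ψe := LinearEquiv.ofBijective ψ (hφ.bijective_of_smul hxm)
    have hid : IsIrreducibleHom (x • LinearMap.id : F →ₗ[R] F) := by
      convert hφ.comp_linearEquiv_s12 ψe.symm
      ext
      simp [ψe]
    let π := LinearEquiv.ofFinrankEq F R
      ((hid.finrank_eq_one ((mem_maximalIdeal x).1 hxm)).trans (Module.finrank_self R).symm)
    refine ⟨ψe ≪≫ₗ π ≪≫ₗ LinearEquiv.toSpanNonzeroSingleton R R x hx0, π, fun z => ?_⟩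
    simp [ψe, mul_comm]
  · rintro ⟨η, π, hcomm⟩
    have hφ : φ = π.symm.toLinearMap ∘ₗ (Ideal.span {x} : Ideal R).subtype ∘ₗ η.toLinearMap := by
      ext z
      exact (π.symm_apply_eq.2 (hcomm z)).symm
    rw [hφ]
    exact ((hx ▸ isIrreducibleHom_maximalIdeal_subtype (IsDiscreteValuationRing.not_a_field R)
      ).comp_linearEquiv_s12 η).linearEquiv_comp π.symm

/-- Let `(R, xR)` be a discrete valuation ring with maximal ideal generated by `x`, let
`θ : xR → R` be the inclusion, and let `φ : M → F` be a monomorphism of finitely generated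
`R`-modules with `F` free and `Im(φ) ⊆ (xR)F`. Then `φ` is irreducible iff there are
isomorphisms `η : M ≅ xR` and `π : F ≅ R` with `θ ∘ η = π ∘ φ`. -/
theorem irreducible_mono_iff_equivalent_to_inclusion_of_dvr
    {R : Type u} [CommRing R] [IsDomain R] [IsDiscreteValuationRing R]
    (x : R) (hx : IsLocalRing.maximalIdeal R = Ideal.span {x})
    {M F : Type u} [AddCommGroup M] [Module R M] [Module.Finite R M]
    [AddCommGroup F] [Module R F] [Module.Finite R F] [Module.Free R F]
    (φ : M →ₗ[R] F) (hinj : Function.Injective φ)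
    (hrange : LinearMap.range φ ≤ (Ideal.span {x} : Ideal R) • (⊤ : Submodule R F)) :
    IsIrreducibleHom φ ↔
      ∃ (η : M ≃ₗ[R] (Ideal.span {x} : Ideal R)) (π : F ≃ₗ[R] R),
        ∀ z : M, ((Ideal.span {x} : Ideal R).subtype (η z)) = π (φ z) :=
  irreducible_mono_iff_equivalent_to_inclusion_of_dvr_general x hx φ hrange
end

section
/- Let (R, m, k) be a commutative noetherian local ring. If R is isomorphic, as an R-module, to a direct summand of its maximal ideal m, then R is a discrete valuation ring (in particular, m is indecomposable and m ≅ R as R-modules). -/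
universe u

/-! A surjection `f : 𝔪 → R` with `f a = 1` is forced to be an isomorphism: for `b ∈ 𝔪` the
elements `a • b` and `b • a` of `𝔪` coincide, so `a * f b = b`. Hence `𝔪 = (a)` with `a` a
nonzerodivisor. By Krull's intersection theorem every nonzero `x` is `a ^ n * u` with `u` a unit,
which makes `R` a domain whose maximal ideal is principal, i.e. a DVR; and `𝔪 ≅ R` is
indecomposable because two proper ideals of a local ring both lie in `𝔪`. -/

open IsLocalRing

namespace Ideal

variable {R : Type*} [CommSemiring R] {I : Ideal R}

theorem coe_mul_apply_comm (f : I →ₗ[R] R) (a b : I) : (a : R) * f b = b * f a := by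
  have hab : (a : R) • b = (b : R) • a := Subtype.ext (mul_comm (a : R) b)
  rw [← smul_eq_mul, ← map_smul, hab, map_smul, smul_eq_mul]

variable {f : I →ₗ[R] R} {a : I}

theorem coe_eq_apply_mul_of_apply_eq_one (ha : f a = 1) (b : I) : (b : R) = f b * a := by
  simpa [ha, mul_comm] using (coe_mul_apply_comm f a b).symm

theorem eq_span_singleton_of_apply_eq_one (ha : f a = 1) : I = span {(a : R)} := by
  refine le_antisymm (fun b hb => ?_) (span_le.2 (Set.singleton_subset_iff.2 a.2))
  exact mem_span_singleton'.2 ⟨f ⟨b, hb⟩, (coe_eq_apply_mul_of_apply_eq_one ha ⟨b, hb⟩).symm⟩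

theorem coe_mem_nonZeroDivisors_of_apply_eq_one (ha : f a = 1) : (a : R) ∈ nonZeroDivisors R := by
  refine mem_nonZeroDivisors_iff_right.2 fun r hr => ?_
  have hra : r • a = 0 := Subtype.ext hr
  simpa [ha] using congrArg f hra

theorem bijective_of_apply_eq_one (ha : f a = 1) : Function.Bijective f := by
  refine ⟨fun b c hbc => Subtype.ext ?_, fun r => ⟨r • a, by simp [ha]⟩⟩
  rw [coe_eq_apply_mul_of_apply_eq_one ha b, coe_eq_apply_mul_of_apply_eq_one ha c, hbc]

end Ideal

namespace IsLocalRing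

variable {R : Type*} [CommRing R] [IsLocalRing R]

theorem exists_pow_mul_isUnit_of_maximalIdeal_eq_span [IsNoetherianRing R] {a : R}
    (hm : maximalIdeal R = Ideal.span {a}) {x : R} (hx : x ≠ 0) :
    ∃ (n : ℕ) (u : R), IsUnit u ∧ x = a ^ n * u := by
  have hfin : FiniteMultiplicity a x := by
    by_contra! hdvd
    refine hx ((Submodule.mem_bot R).1 ?_)
    rw [← Ideal.iInf_pow_eq_bot_of_isLocalRing _ (maximalIdeal.isMaximal R).ne_top]
    refine Ideal.mem_iInf.2 fun n => ?_
    rw [hm, Ideal.span_singleton_pow, Ideal.mem_span_singleton]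
    exact (pow_dvd_pow a n.le_succ).trans (hdvd n)
  obtain ⟨u, hxu, hau⟩ := hfin.exists_eq_pow_mul_and_not_dvd
  refine ⟨_, u, notMem_maximalIdeal.1 fun hu => hau ?_, hxu⟩
  rwa [hm, Ideal.mem_span_singleton] at hu

theorem isDomain_of_maximalIdeal_eq_span [IsNoetherianRing R] {a : R}
    (ha : a ∈ nonZeroDivisors R) (hm : maximalIdeal R = Ideal.span {a}) : IsDomain R := by
  have : NoZeroDivisors R := by
    refine ⟨fun {x y} hxy => ?_⟩
    by_contra! hne
    obtain ⟨m, u, hu, rfl⟩ := exists_pow_mul_isUnit_of_maximalIdeal_eq_span hm hne.1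
    obtain ⟨n, v, hv, rfl⟩ := exists_pow_mul_isUnit_of_maximalIdeal_eq_span hm hne.2
    have hpow : a ^ (m + n) = 0 := by
      rw [← (hu.mul hv).mul_left_eq_zero, ← hxy]
      ring
    exact zero_notMem_nonZeroDivisors (hpow ▸ pow_mem ha (m + n))
  exact NoZeroDivisors.to_isDomain R

theorem isDiscreteValuationRing_of_maximalIdeal_eq_span [IsNoetherianRing R] [IsDomain R] {a : R}
    (ha : a ≠ 0) (hm : maximalIdeal R = Ideal.span {a}) : IsDiscreteValuationRing R := by
  have hR : ¬IsField R := by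
    rw [isField_iff_maximalIdeal_eq, hm, Ideal.span_singleton_eq_bot]
    exact ha
  have hprincipal : (maximalIdeal R).IsPrincipal := ⟨⟨a, hm⟩⟩
  exact ((IsDiscreteValuationRing.TFAE R hR).out 0 4).2 hprincipal

end IsLocalRing

theorem IsIndecomposableModule.of_linearEquiv {R M N : Type u} [CommRing R] [AddCommGroup M]
    [Module R M] [AddCommGroup N] [Module R N] (e : M ≃ₗ[R] N) (hN : IsIndecomposableModule R N) :
    IsIndecomposableModule R M := by
  obtain ⟨_, hsplit⟩ := hN
  refine ⟨e.toEquiv.nontrivial, fun A B hAB => ?_⟩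
  have := hsplit _ _ ((Submodule.orderIsoMapComap e).isCompl_iff.1 hAB)
  simpa only [Submodule.orderIsoMapComap_apply, Submodule.map_eq_bot_iff] using this

theorem IsLocalRing.isIndecomposableModule_self (R : Type u) [CommRing R] [IsLocalRing R] :
    IsIndecomposableModule R R := by
  refine ⟨inferInstance, fun A B hAB => ?_⟩
  have hAB_top : A = ⊤ ∨ B = ⊤ := by
    by_contra! hne
    exact (maximalIdeal.isMaximal R).ne_top (top_le_iff.1 (hAB.sup_eq_top ▸
      sup_le (le_maximalIdeal hne.1) (le_maximalIdeal hne.2)))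
  rcases hAB_top with rfl | rfl
  · exact .inr (eq_bot_of_isCompl_top hAB.symm)
  · exact .inl (eq_bot_of_isCompl_top hAB)

/-- If a commutative noetherian local ring `(R, 𝔪)` is isomorphic, as an `R`-module, to a
direct summand of its maximal ideal `𝔪`, then `R` is a discrete valuation ring; in
particular `𝔪` is indecomposable and `𝔪 ≅ R` as `R`-modules. -/
theorem dvr_of_free_summand_of_maximalIdeal
    {R : Type u} [CommRing R] [IsNoetherianRing R] [IsLocalRing R]
    (h : ∃ (K : Type u) (_ : AddCommGroup K) (_ : Module R K),
      Nonempty ((IsLocalRing.maximalIdeal R) ≃ₗ[R] (R × K))) :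
    (∃ _ : IsDomain R, IsDiscreteValuationRing R) ∧
    IsIndecomposableModule R (IsLocalRing.maximalIdeal R) ∧
    Nonempty ((IsLocalRing.maximalIdeal R) ≃ₗ[R] R) := by
  obtain ⟨K, _, _, ⟨e⟩⟩ := h
  let f : maximalIdeal R →ₗ[R] R := LinearMap.fst R R K ∘ₗ e.toLinearMap
  let a : maximalIdeal R := e.symm (1, 0)
  have hfa : f a = 1 := by simp [f, a]
  have hm := Ideal.eq_span_singleton_of_apply_eq_one hfa
  have ha := Ideal.coe_mem_nonZeroDivisors_of_apply_eq_one hfa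
  have hdomain : IsDomain R := isDomain_of_maximalIdeal_eq_span ha hm
  have iso : maximalIdeal R ≃ₗ[R] R := .ofBijective f (Ideal.bijective_of_apply_eq_one hfa)
  exact ⟨⟨hdomain, isDiscreteValuationRing_of_maximalIdeal_eq_span (nonZeroDivisors.ne_zero ha) hm⟩,
    (isIndecomposableModule_self R).of_linearEquiv iso, ⟨iso⟩⟩
end
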